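/- Nonsmooth ITD convergence rate (Theorem 4.1(i), set-valued form): let 0 ≤ q < 1, L, M ≥ 0, R > 0 and Δ₀ ≥ 0. Let ℬ ⊆ ℝ^{d×(d+m)} be a nonempty bounded set of real block matrices with ‖ℬ₁‖_sup ≤ q, and let 𝒮 ⊆ ℝ^{d×m} be a nonempty bounded set with 𝒮 = ℬ(𝒮). Let (Δ_t)_{t≥0} be nonnegative reals with Δ_t ≤ q^t Δ₀ for all t, and set δ_t := 1 if Δ_t > R and δ_t := 0 otherwise, and δ̄_t := (1/t) Σ_{i=0}^{t−1} δ_i for t ≥ 1. Let (𝒜_t)_{t≥0} be nonempty bounded subsets of ℝ^{d×(d+m)} with ‖𝒜_{t,1}‖_sup ≤ q and gap(𝒜_t, ℬ) ≤ (L + (M/R)·δ_t)·Δ_t for every t. Define the ITD sets by 𝒟₀ := {0} and 𝒟_t := 𝒜_{t−1}(𝒟_{t−1}) for t ≥ 1. Then for every t ≥ 1, with B := ‖ℬ₂‖_sup: gap(𝒟_t, 𝒮) ≤ (B/(1−q))·q^t + ((B+1)/(1−q))·(L + (M/R)·δ̄_t)·Δ₀·t·q^{t−1}. -/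

import Mathlib

open scoped Matrix.Norms.L2Operator

/-- The excess (gap) of a set `𝒜` over a set `ℬ` in a normed additive group:
`gap 𝒜 ℬ = sup_{A ∈ 𝒜} inf_{B ∈ ℬ} ‖A - B‖`. -/
noncomputable def gap {E : Type*} [NormedAddCommGroup E] (𝒜 ℬ : Set E) : ℝ :=
  ⨆ A : 𝒜, ⨅ B : ℬ, ‖(A : E) - (B : E)‖

/-- `‖𝒜‖_sup = sup_{A ∈ 𝒜} ‖A‖`. -/
noncomputable def supNorm {E : Type*} [NormedAddCommGroup E] (𝒜 : Set E) : ℝ :=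
  ⨆ A : 𝒜, ‖(A : E)‖

/-- First block `A₁ ∈ ℝ^{n×p₁}` of a block matrix `A = [A₁, A₂] ∈ ℝ^{n×(p₁+p₂)}`. -/
def blk1 {n p₁ p₂ : ℕ} (A : Matrix (Fin n) (Fin (p₁ + p₂)) ℝ) :
    Matrix (Fin n) (Fin p₁) ℝ :=
  A.submatrix id (Fin.castAdd p₂)

/-- Second block `A₂ ∈ ℝ^{n×p₂}` of a block matrix `A = [A₁, A₂] ∈ ℝ^{n×(p₁+p₂)}`. -/
def blk2 {n p₁ p₂ : ℕ} (A : Matrix (Fin n) (Fin (p₁ + p₂)) ℝ) :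
    Matrix (Fin n) (Fin p₂) ℝ :=
  A.submatrix id (Fin.natAdd p₁)

/-- The affine action `𝒜(𝒳) = {A₁ X + A₂ | [A₁, A₂] ∈ 𝒜, X ∈ 𝒳}` of a set of block
matrices `𝒜 ⊆ ℝ^{n×(p₁+p₂)}` on a set of matrices `𝒳 ⊆ ℝ^{p₁×p₂}`. -/
def affAct {n p₁ p₂ : ℕ} (𝒜 : Set (Matrix (Fin n) (Fin (p₁ + p₂)) ℝ))
    (𝒳 : Set (Matrix (Fin p₁) (Fin p₂) ℝ)) : Set (Matrix (Fin n) (Fin p₂) ℝ) :=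
  {Y | ∃ A ∈ 𝒜, ∃ X ∈ 𝒳, Y = blk1 A * X + blk2 A}

/-!
With `K = ‖ℬ₂‖_sup / (1 - q)`, the fixed-point equation `𝒮 = ℬ(𝒮)` gives `‖S‖ ≤ K` on `𝒮`.
Comparing `A₁X + A₂` with `B₁S + B₂` yields the one-step estimate
`gap(𝒟_{t+1}, 𝒮) ≤ q gap(𝒟_t, 𝒮) + (K + 1) gap(𝒜_t, ℬ)`, and by hypothesis
`gap(𝒜_t, ℬ) ≤ q^t (L + (M/R) δ_t) Δ₀`. Unrolling this linear recursion from
`gap(𝒟_0, 𝒮) ≤ K` gives `q^t K + (K + 1) Δ₀ q^(t-1) ∑_{i<t} (L + (M/R) δ_i)`, and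
`K + 1 ≤ (‖ℬ₂‖_sup + 1) / (1 - q)`.
-/

open Bornology Metric Finset

namespace Matrix

variable {𝕜 : Type*} [RCLike 𝕜] {m n k : Type*} [Fintype m] [Fintype n] [Fintype k]
  [DecidableEq n] [DecidableEq k]

lemma l2_opNorm_one_le : ‖(1 : Matrix k k 𝕜)‖ ≤ 1 := by
  have h := l2_opNorm_conjTranspose_mul_self (1 : Matrix k k 𝕜)
  rw [conjTranspose_one, one_mul] at h
  nlinarith [norm_nonneg (1 : Matrix k k 𝕜)]

lemma l2_opNorm_submatrix_id_le (A : Matrix m n 𝕜) {f : k → n} (hf : Function.Injective f) :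
    ‖A.submatrix id f‖ ≤ ‖A‖ := by
  set P := (1 : Matrix n n 𝕜).submatrix id f
  have hP : Pᴴ * P = 1 := by
    ext j j'
    simp [P, mul_apply, one_apply, hf.eq_iff, eq_comm]
  have hP1 : ‖P‖ ≤ 1 := by
    have := l2_opNorm_conjTranspose_mul_self P
    rw [hP] at this
    nlinarith [norm_nonneg P, l2_opNorm_one_le (𝕜 := 𝕜) (k := k)]
  calc ‖A.submatrix id f‖ = ‖A * P‖ := congrArg norm (mul_submatrix_one (Equiv.refl n) f A).symm
    _ ≤ ‖A‖ * ‖P‖ := l2_opNorm_mul A P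
    _ ≤ ‖A‖ := mul_le_of_le_one_right (norm_nonneg A) hP1

end Matrix

section Blocks

variable {n p₁ p₂ : ℕ}

lemma norm_blk1_le (A : Matrix (Fin n) (Fin (p₁ + p₂)) ℝ) : ‖blk1 A‖ ≤ ‖A‖ :=
  A.l2_opNorm_submatrix_id_le (Fin.castAdd_injective p₁ p₂)

lemma norm_blk2_le (A : Matrix (Fin n) (Fin (p₁ + p₂)) ℝ) : ‖blk2 A‖ ≤ ‖A‖ :=
  A.l2_opNorm_submatrix_id_le (Fin.natAdd_injective p₂ p₁)

lemma blk1_sub (A B : Matrix (Fin n) (Fin (p₁ + p₂)) ℝ) : blk1 (A - B) = blk1 A - blk1 B := rfl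

lemma blk2_sub (A B : Matrix (Fin n) (Fin (p₁ + p₂)) ℝ) : blk2 (A - B) = blk2 A - blk2 B := rfl

lemma norm_blk_mul_add_le (A : Matrix (Fin n) (Fin (p₁ + p₂)) ℝ) (X : Matrix (Fin p₁) (Fin p₂) ℝ) :
    ‖blk1 A * X + blk2 A‖ ≤ ‖blk1 A‖ * ‖X‖ + ‖blk2 A‖ :=
  (norm_add_le _ _).trans (by gcongr; exact Matrix.l2_opNorm_mul _ _)

lemma norm_blk_mul_add_sub_le (A B : Matrix (Fin n) (Fin (p₁ + p₂)) ℝ)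
    (X S : Matrix (Fin p₁) (Fin p₂) ℝ) :
    ‖blk1 A * X + blk2 A - (blk1 B * S + blk2 B)‖ ≤ ‖blk1 A‖ * ‖X - S‖ + (‖S‖ + 1) * ‖A - B‖ := by
  have hsplit : blk1 A * X + blk2 A - (blk1 B * S + blk2 B)
      = blk1 A * (X - S) + blk1 (A - B) * S + blk2 (A - B) := by
    rw [blk1_sub, blk2_sub, Matrix.mul_sub, Matrix.sub_mul]; abel
  rw [hsplit]
  calc _ ≤ ‖blk1 A * (X - S)‖ + ‖blk1 (A - B) * S‖ + ‖blk2 (A - B)‖ := norm_add₃_le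
    _ ≤ ‖blk1 A‖ * ‖X - S‖ + ‖A - B‖ * ‖S‖ + ‖A - B‖ := by
        gcongr
        · exact Matrix.l2_opNorm_mul _ _
        · exact (Matrix.l2_opNorm_mul _ _).trans (by gcongr; exact norm_blk1_le _)
        · exact norm_blk2_le _
    _ = ‖blk1 A‖ * ‖X - S‖ + (‖S‖ + 1) * ‖A - B‖ := by ring

lemma Bornology.IsBounded.affAct {𝒜 : Set (Matrix (Fin n) (Fin (p₁ + p₂)) ℝ)}
    {𝒳 : Set (Matrix (Fin p₁) (Fin p₂) ℝ)} (h𝒜 : IsBounded 𝒜) (h𝒳 : IsBounded 𝒳) :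
    IsBounded (affAct 𝒜 𝒳) := by
  obtain ⟨N, hN0, hN⟩ := h𝒜.exists_pos_norm_le
  obtain ⟨C, -, hC⟩ := h𝒳.exists_pos_norm_le
  have := hN0.le
  refine isBounded_iff_forall_norm_le.2 ⟨N * C + N, ?_⟩
  rintro _ ⟨A, hA, X, hX, rfl⟩
  calc _ ≤ ‖blk1 A‖ * ‖X‖ + ‖blk2 A‖ := norm_blk_mul_add_le A X
    _ ≤ N * C + N := by
        gcongr
        exacts [(norm_blk1_le A).trans (hN A hA), hC X hX, (norm_blk2_le A).trans (hN A hA)]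

end Blocks

section SupNormGap

variable {E F : Type*} [NormedAddCommGroup E] [NormedAddCommGroup F] {s 𝒜 ℬ : Set E} {c : ℝ}

lemma supNorm_nonneg : 0 ≤ supNorm s := Real.iSup_nonneg fun _ => norm_nonneg _

lemma norm_le_supNorm (hs : IsBounded s) {x : E} (hx : x ∈ s) : ‖x‖ ≤ supNorm s := by
  obtain ⟨C, hC⟩ := hs.exists_norm_le
  exact le_ciSup ⟨C, by rintro _ ⟨y, rfl⟩; exact hC y y.2⟩ (⟨x, hx⟩ : s)

lemma norm_le_supNorm_image {f : E → F} (hf : ∀ x, ‖f x‖ ≤ ‖x‖) (hs : IsBounded s) {x : E}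
    (hx : x ∈ s) : ‖f x‖ ≤ supNorm (f '' s) := by
  refine norm_le_supNorm ?_ (Set.mem_image_of_mem f hx)
  obtain ⟨C, hC⟩ := hs.exists_norm_le
  exact isBounded_iff_forall_norm_le.2 ⟨C, by rintro _ ⟨y, hy, rfl⟩; exact (hf y).trans (hC y hy)⟩

lemma norm_blk1_le_of_supNorm_le {n p₁ p₂ : ℕ} {𝒜 : Set (Matrix (Fin n) (Fin (p₁ + p₂)) ℝ)}
    {q : ℝ} (h𝒜 : IsBounded 𝒜) (hq : supNorm (blk1 '' 𝒜) ≤ q) {A : Matrix (Fin n) (Fin (p₁ + p₂)) ℝ}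
    (hA : A ∈ 𝒜) : ‖blk1 A‖ ≤ q :=
  (norm_le_supNorm_image norm_blk1_le h𝒜 hA).trans hq

lemma supNorm_le (hc : 0 ≤ c) (h : ∀ x ∈ s, ‖x‖ ≤ c) : supNorm s ≤ c :=
  Real.iSup_le (fun x => h x x.2) hc

lemma gap_eq_iSup_infDist : gap 𝒜 ℬ = ⨆ a : 𝒜, infDist (a : E) ℬ := by
  simp only [gap, infDist_eq_iInf, dist_eq_norm]

lemma gap_nonneg : 0 ≤ gap 𝒜 ℬ := by
  rw [gap_eq_iSup_infDist]
  exact Real.iSup_nonneg fun _ => infDist_nonneg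

lemma infDist_le_gap (h𝒜 : IsBounded 𝒜) {a : E} (ha : a ∈ 𝒜) : infDist a ℬ ≤ gap 𝒜 ℬ := by
  rw [gap_eq_iSup_infDist]
  refine le_ciSup (f := fun a : 𝒜 => infDist (a : E) ℬ) ?_ ⟨a, ha⟩
  obtain ⟨C, hC⟩ := ((lipschitz_infDist_pt ℬ).isBounded_image h𝒜).bddAbove
  exact ⟨C, by rintro _ ⟨b, rfl⟩; exact hC ⟨b, b.2, rfl⟩⟩

lemma gap_le (hc : 0 ≤ c) (h : ∀ a ∈ 𝒜, infDist a ℬ ≤ c) : gap 𝒜 ℬ ≤ c := by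
  rw [gap_eq_iSup_infDist]
  exact Real.iSup_le (fun a => h a a.2) hc

lemma gap_singleton_le (hℬ : ℬ.Nonempty) (hc : ∀ b ∈ ℬ, ‖b‖ ≤ c) : gap {0} ℬ ≤ c := by
  obtain ⟨b, hb⟩ := hℬ
  refine gap_le ((norm_nonneg b).trans (hc b hb)) fun x hx => ?_
  rw [Set.mem_singleton_iff] at hx
  calc infDist x ℬ ≤ dist x b := infDist_le_dist_of_mem hb
    _ = ‖b‖ := by rw [hx, dist_zero_left]
    _ ≤ c := hc b hb

end SupNormGap

lemma le_mul_infDist_add {α : Type*} [PseudoMetricSpace α] {s : Set α} {x : α} {p c r : ℝ}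
    (hs : s.Nonempty) (hp : 0 ≤ p) (h : ∀ y ∈ s, r ≤ p * dist x y + c) :
    r ≤ p * infDist x s + c := by
  have : Nonempty s := hs.to_subtype
  rw [← sub_le_iff_le_add, infDist_eq_iInf, Real.mul_iInf_of_nonneg hp]
  exact le_ciInf fun y => sub_le_iff_le_add.2 (h y y.2)

section AffineAction

variable {n p₁ p₂ : ℕ} {ℬ 𝒜 : Set (Matrix (Fin n) (Fin (p₁ + p₂)) ℝ)}
  {𝒮 𝒳 : Set (Matrix (Fin p₁) (Fin p₂) ℝ)} {q K : ℝ}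

lemma infDist_affAct_le (hℬ : ℬ.Nonempty) (h𝒮 : 𝒮.Nonempty) (hK : ∀ S ∈ 𝒮, ‖S‖ ≤ K)
    (A : Matrix (Fin n) (Fin (p₁ + p₂)) ℝ) (X : Matrix (Fin p₁) (Fin p₂) ℝ) :
    infDist (blk1 A * X + blk2 A) (affAct ℬ 𝒮) ≤
      ‖blk1 A‖ * infDist X 𝒮 + (K + 1) * infDist A ℬ := by
  have hK0 : 0 ≤ K := h𝒮.elim fun S hS => (norm_nonneg S).trans (hK S hS)
  rw [add_comm (‖blk1 A‖ * _)]
  refine le_mul_infDist_add hℬ (by positivity) fun B hB => ?_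
  rw [add_comm ((K + 1) * _)]
  refine le_mul_infDist_add h𝒮 (norm_nonneg _) fun S hS => ?_
  calc _ ≤ dist (blk1 A * X + blk2 A) (blk1 B * S + blk2 B) :=
        infDist_le_dist_of_mem (show _ ∈ affAct ℬ 𝒮 from ⟨B, hB, S, hS, rfl⟩)
    _ ≤ ‖blk1 A‖ * ‖X - S‖ + (‖S‖ + 1) * ‖A - B‖ := by
        rw [dist_eq_norm]; exact norm_blk_mul_add_sub_le A B X S
    _ ≤ ‖blk1 A‖ * dist X S + (K + 1) * dist A B := by
        rw [dist_eq_norm, dist_eq_norm]; gcongr; exact hK S hS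

lemma gap_affAct_le (h𝒜 : IsBounded 𝒜) (h𝒳 : IsBounded 𝒳) (hℬ : ℬ.Nonempty)
    (h𝒮 : 𝒮.Nonempty) (hK : ∀ S ∈ 𝒮, ‖S‖ ≤ K) (hq0 : 0 ≤ q) (hq : ∀ A ∈ 𝒜, ‖blk1 A‖ ≤ q) :
    gap (affAct 𝒜 𝒳) (affAct ℬ 𝒮) ≤ q * gap 𝒳 𝒮 + (K + 1) * gap 𝒜 ℬ := by
  have hK0 : 0 ≤ K := h𝒮.elim fun S hS => (norm_nonneg S).trans (hK S hS)
  have := gap_nonneg (𝒜 := 𝒳) (ℬ := 𝒮)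
  have := gap_nonneg (𝒜 := 𝒜) (ℬ := ℬ)
  refine gap_le (by positivity) ?_
  rintro _ ⟨A, hA, X, hX, rfl⟩
  calc _ ≤ ‖blk1 A‖ * infDist X 𝒮 + (K + 1) * infDist A ℬ := infDist_affAct_le hℬ h𝒮 hK A X
    _ ≤ q * gap 𝒳 𝒮 + (K + 1) * gap 𝒜 ℬ := by
        gcongr
        exacts [infDist_nonneg, hq A hA, infDist_le_gap h𝒳 hX, infDist_le_gap h𝒜 hA]

end AffineAction

lemma supNorm_le_of_subset_affAct {p₁ p₂ : ℕ} {ℬ : Set (Matrix (Fin p₁) (Fin (p₁ + p₂)) ℝ)}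
    {𝒮 : Set (Matrix (Fin p₁) (Fin p₂) ℝ)} {q B : ℝ} (h𝒮 : IsBounded 𝒮) (hfix : 𝒮 ⊆ affAct ℬ 𝒮)
    (hq0 : 0 ≤ q) (hq1 : q < 1) (hB : 0 ≤ B) (h₁ : ∀ A ∈ ℬ, ‖blk1 A‖ ≤ q)
    (h₂ : ∀ A ∈ ℬ, ‖blk2 A‖ ≤ B) : supNorm 𝒮 ≤ B / (1 - q) := by
  have h0 := supNorm_nonneg (s := 𝒮)
  have hrec : supNorm 𝒮 ≤ q * supNorm 𝒮 + B := by
    refine supNorm_le (by positivity) fun S hS => ?_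
    obtain ⟨A, hA, X, hX, rfl⟩ := hfix hS
    calc _ ≤ ‖blk1 A‖ * ‖X‖ + ‖blk2 A‖ := norm_blk_mul_add_le A X
      _ ≤ q * supNorm 𝒮 + B := by
          gcongr
          exacts [h₁ A hA, norm_le_supNorm h𝒮 hX, h₂ A hA]
  rw [le_div_iff₀ (by linarith)]
  linarith

lemma le_pow_mul_add_sum_mul_pow {u a : ℕ → ℝ} {q c : ℝ} (hq : 0 ≤ q) (h0 : u 0 ≤ c)
    (hstep : ∀ t, u (t + 1) ≤ q * u t + q ^ t * a t) (t : ℕ) :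
    u t ≤ q ^ t * c + (∑ i ∈ range t, a i) * q ^ (t - 1) := by
  induction t with
  | zero => simpa using h0
  | succ t ih =>
    have hshift : q * ((∑ i ∈ range t, a i) * q ^ (t - 1)) = (∑ i ∈ range t, a i) * q ^ t := by
      cases t with
      | zero => simp
      | succ t => rw [Nat.add_sub_cancel, pow_succ]; ring
    calc u (t + 1) ≤ q * u t + q ^ t * a t := hstep t
      _ ≤ q * (q ^ t * c + (∑ i ∈ range t, a i) * q ^ (t - 1)) + q ^ t * a t := by gcongr
      _ = q ^ (t + 1) * c + (∑ i ∈ range (t + 1), a i) * q ^ (t + 1 - 1) := by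
          rw [mul_add, hshift, sum_range_succ, Nat.add_sub_cancel, pow_succ]; ring

lemma sum_range_add_mul_eq (L c : ℝ) (δ : ℕ → ℝ) (t : ℕ) :
    ∑ i ∈ range t, (L + c * δ i) = (L + c * ((1 / (t : ℝ)) * ∑ i ∈ range t, δ i)) * t := by
  rcases Nat.eq_zero_or_pos t with rfl | ht
  · simp
  · have : (t : ℝ) ≠ 0 := by positivity
    rw [sum_add_distrib, ← mul_sum, sum_const, card_range, nsmul_eq_mul]
    field_simp

theorem itd_rate_general {d m : ℕ} (q L M R Δ₀ : ℝ)
    (hq0 : 0 ≤ q) (hq1 : q < 1) (hL : 0 ≤ L) (hM : 0 ≤ M) (hR : 0 < R) (hΔ₀ : 0 ≤ Δ₀)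
    (ℬ : Set (Matrix (Fin d) (Fin (d + m)) ℝ))
    (hℬne : ℬ.Nonempty) (hℬb : Bornology.IsBounded ℬ)
    (hℬ₁ : supNorm (blk1 '' ℬ) ≤ q)
    (𝒮 : Set (Matrix (Fin d) (Fin m) ℝ))
    (h𝒮ne : 𝒮.Nonempty) (h𝒮b : Bornology.IsBounded 𝒮)
    (h𝒮fix : 𝒮 = affAct ℬ 𝒮)
    (Δ : ℕ → ℝ) (hΔ : ∀ t, Δ t ≤ q ^ t * Δ₀)
    (𝒜 : ℕ → Set (Matrix (Fin d) (Fin (d + m)) ℝ))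
    (h𝒜b : ∀ t, Bornology.IsBounded (𝒜 t))
    (h𝒜₁ : ∀ t, supNorm (blk1 '' 𝒜 t) ≤ q)
    (h𝒜gap : ∀ t, gap (𝒜 t) ℬ ≤ (L + (M / R) * (if R < Δ t then 1 else 0)) * Δ t)
    (𝒟 : ℕ → Set (Matrix (Fin d) (Fin m) ℝ))
    (h𝒟0 : 𝒟 0 = {0})
    (h𝒟succ : ∀ t, 𝒟 (t + 1) = affAct (𝒜 t) (𝒟 t)) :
    ∀ t : ℕ, 1 ≤ t →
      gap (𝒟 t) 𝒮 ≤
        supNorm (blk2 '' ℬ) / (1 - q) * q ^ t +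
          (supNorm (blk2 '' ℬ) + 1) / (1 - q) *
            (L + (M / R) *
              ((1 / (t : ℝ)) * ∑ i ∈ Finset.range t, (if R < Δ i then (1 : ℝ) else 0))) *
            Δ₀ * t * q ^ (t - 1) := by
  intro t _
  set K := supNorm (blk2 '' ℬ) / (1 - q)
  have hK : ∀ S ∈ 𝒮, ‖S‖ ≤ K := fun S hS =>
    (norm_le_supNorm h𝒮b hS).trans <| supNorm_le_of_subset_affAct h𝒮b h𝒮fix.subset hq0 hq1
      supNorm_nonneg (fun _ => norm_blk1_le_of_supNorm_le hℬb hℬ₁)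
      fun _ => norm_le_supNorm_image norm_blk2_le hℬb
  have h𝒟b : ∀ t, IsBounded (𝒟 t) := fun t => by
    induction t with
    | zero => rw [h𝒟0]; exact isBounded_singleton
    | succ t ih => rw [h𝒟succ]; exact (h𝒜b t).affAct ih
  have hrate : ∀ i, 0 ≤ L + M / R * (if R < Δ i then (1 : ℝ) else 0) := fun i => by positivity
  have hstep : ∀ t, gap (𝒟 (t + 1)) 𝒮 ≤ q * gap (𝒟 t) 𝒮 +
      q ^ t * ((K + 1) * Δ₀ * (L + M / R * (if R < Δ t then (1 : ℝ) else 0))) := fun t =>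
    calc gap (𝒟 (t + 1)) 𝒮 = gap (affAct (𝒜 t) (𝒟 t)) (affAct ℬ 𝒮) := by rw [h𝒟succ, ← h𝒮fix]
      _ ≤ q * gap (𝒟 t) 𝒮 + (K + 1) * gap (𝒜 t) ℬ :=
        gap_affAct_le (h𝒜b t) (h𝒟b t) hℬne h𝒮ne hK hq0
          fun _ => norm_blk1_le_of_supNorm_le (h𝒜b t) (h𝒜₁ t)
      _ ≤ q * gap (𝒟 t) 𝒮 +
          (K + 1) * ((L + M / R * (if R < Δ t then (1 : ℝ) else 0)) * (q ^ t * Δ₀)) := by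
        have : 0 ≤ K := div_nonneg supNorm_nonneg (by linarith)
        gcongr
        exact (h𝒜gap t).trans (mul_le_mul_of_nonneg_left (hΔ t) (hrate t))
      _ = _ := by ring
  have hK1 : K + 1 ≤ (supNorm (blk2 '' ℬ) + 1) / (1 - q) := by
    rw [div_add_one (by linarith), div_le_div_iff_of_pos_right (by linarith)]; linarith
  calc gap (𝒟 t) 𝒮 ≤ q ^ t * K + (∑ i ∈ range t,
        (K + 1) * Δ₀ * (L + M / R * (if R < Δ i then (1 : ℝ) else 0))) * q ^ (t - 1) :=
      le_pow_mul_add_sum_mul_pow (u := fun t => gap (𝒟 t) 𝒮) hq0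
        (h𝒟0 ▸ gap_singleton_le h𝒮ne hK) hstep t
    _ ≤ _ := by
      rw [← mul_sum, sum_range_add_mul_eq]
      have hrest : 0 ≤ (L + M / R * ((1 / (t : ℝ)) *
          ∑ i ∈ range t, (if R < Δ i then (1 : ℝ) else 0))) * Δ₀ * t * q ^ (t - 1) := by
        positivity
      nlinarith [mul_le_mul_of_nonneg_right hK1 hrest]

/-- Nonsmooth ITD convergence rate (Theorem 4.1(i), set-valued form). -/
theorem itd_rate {d m : ℕ} (q L M R Δ₀ : ℝ)
    (hq0 : 0 ≤ q) (hq1 : q < 1) (hL : 0 ≤ L) (hM : 0 ≤ M) (hR : 0 < R) (hΔ₀ : 0 ≤ Δ₀)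
    (ℬ : Set (Matrix (Fin d) (Fin (d + m)) ℝ))
    (hℬne : ℬ.Nonempty) (hℬb : Bornology.IsBounded ℬ)
    (hℬ₁ : supNorm (blk1 '' ℬ) ≤ q)
    (𝒮 : Set (Matrix (Fin d) (Fin m) ℝ))
    (h𝒮ne : 𝒮.Nonempty) (h𝒮b : Bornology.IsBounded 𝒮)
    (h𝒮fix : 𝒮 = affAct ℬ 𝒮)
    (Δ : ℕ → ℝ) (hΔnn : ∀ t, 0 ≤ Δ t) (hΔ : ∀ t, Δ t ≤ q ^ t * Δ₀)
    (𝒜 : ℕ → Set (Matrix (Fin d) (Fin (d + m)) ℝ))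
    (h𝒜ne : ∀ t, (𝒜 t).Nonempty) (h𝒜b : ∀ t, Bornology.IsBounded (𝒜 t))
    (h𝒜₁ : ∀ t, supNorm (blk1 '' 𝒜 t) ≤ q)
    (h𝒜gap : ∀ t, gap (𝒜 t) ℬ ≤ (L + (M / R) * (if R < Δ t then 1 else 0)) * Δ t)
    (𝒟 : ℕ → Set (Matrix (Fin d) (Fin m) ℝ))
    (h𝒟0 : 𝒟 0 = {0})
    (h𝒟succ : ∀ t, 𝒟 (t + 1) = affAct (𝒜 t) (𝒟 t)) :
    ∀ t : ℕ, 1 ≤ t →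
      gap (𝒟 t) 𝒮 ≤
        supNorm (blk2 '' ℬ) / (1 - q) * q ^ t +
          (supNorm (blk2 '' ℬ) + 1) / (1 - q) *
            (L + (M / R) *
              ((1 / (t : ℝ)) * ∑ i ∈ Finset.range t, (if R < Δ i then (1 : ℝ) else 0))) *
            Δ₀ * t * q ^ (t - 1) :=
  itd_rate_general q L M R Δ₀ hq0 hq1 hL hM hR hΔ₀ ℬ hℬne hℬb hℬ₁ 𝒮 h𝒮ne h𝒮b h𝒮fix Δ hΔ 𝒜 h𝒜b h𝒜₁
    h𝒜gap 𝒟 h𝒟0 h𝒟succ
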